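/- Let $\mu \in \mathbb{R}$, $a > 0$. The function $T \mapsto \int_{\mathbb{R}} \frac{\tanh((p^2-\mu)/(2T))}{p^2 - \mu}\,\frac{dp}{2\pi}$ is strictly decreasing on $(0,\infty)$, tends to $0$ as $T \to \infty$, and hence the equation $\frac{1}{a} = \int_{\mathbb{R}} \frac{\tanh((p^2-\mu)/(2T))}{p^2-\mu}\,\frac{dp}{2\pi}$ has at most one solution $T_c \in (0,\infty)$. -/

import Mathlib

/-!
For fixed `s = p² - μ` the integrand `tanh (s / 2T) / s` is positive and strictly decreasing in
`T`, because `tanh` is increasing and odd; integrating keeps strictness since the inequality holds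
everywhere. The integrand is at most `min (1 / 2T) (1 / |s|)`, hence dominated for `T ≥ T₀` by a
multiple of `(1 + p²)⁻¹`, and it tends to `0` pointwise, so dominated convergence gives the limit.
-/

open MeasureTheory Real Set Filter Topology

noncomputable def bcsIntegral (μ : ℝ) (T : ℝ) : ℝ :=
  ∫ p : ℝ, (if p^2 = μ then 1 / (2 * T)
    else Real.tanh ((p^2 - μ) / (2 * T)) / (p^2 - μ)) / (2 * Real.pi)

namespace Real

theorem strictMono_tanh : StrictMono tanh := fun x y hxy => by
  rwa [← artanh_lt_artanh_iff ⟨neg_one_lt_tanh x, tanh_lt_one x⟩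
    ⟨neg_one_lt_tanh y, tanh_lt_one y⟩, artanh_tanh, artanh_tanh]

theorem tanh_pos {x : ℝ} (hx : 0 < x) : 0 < tanh x := by
  simpa using strictMono_tanh hx

theorem tanh_le_self {x : ℝ} (hx : 0 ≤ x) : tanh x ≤ x := by
  rcases hx.eq_or_lt with rfl | hx
  · simp
  -- mean value theorem: `sinh x = x cosh c` for some `c ∈ (0, x)`, and `cosh c ≤ cosh x`
  obtain ⟨c, hc, hslope⟩ := exists_hasDerivAt_eq_slope sinh cosh hx
    continuous_sinh.continuousOn fun c _ => hasDerivAt_sinh c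
  rw [sinh_zero, sub_zero, sub_zero, eq_div_iff hx.ne'] at hslope
  have hcosh : cosh c ≤ cosh x :=
    cosh_le_cosh.2 (abs_le_abs_of_nonneg hc.1.le hc.2.le)
  rw [tanh_eq_sinh_div_cosh, div_le_iff₀ (cosh_pos x)]
  nlinarith

theorem continuous_tanh : Continuous tanh := by
  simp_rw [funext tanh_eq_sinh_div_cosh]
  exact continuous_sinh.div continuous_cosh fun x => (cosh_pos x).ne'

end Real

theorem MeasureTheory.integral_lt_integral_of_forall_lt {α : Type*} [MeasurableSpace α]
    {μ : Measure α} [NeZero μ] {f g : α → ℝ} (hf : Integrable f μ) (hg : Integrable g μ)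
    (hfg : ∀ x, f x < g x) : ∫ x, f x ∂μ < ∫ x, g x ∂μ := by
  have hsupp : Function.support (fun x => g x - f x) = univ :=
    Function.support_eq_univ fun x => (sub_pos.2 (hfg x)).ne'
  have hpos : 0 < ∫ x, (g x - f x) ∂μ := by
    rw [integral_pos_iff_support_of_nonneg (fun x => (sub_pos.2 (hfg x)).le) (hg.sub hf), hsupp,
      pos_iff_ne_zero, Ne, Measure.measure_univ_eq_zero]
    exact NeZero.ne μ
  rwa [integral_sub hg hf, sub_pos] at hpos

noncomputable def bcsKernel (T s : ℝ) : ℝ :=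
  if s = 0 then 1 / (2 * T) else tanh (s / (2 * T)) / s

section bcsKernel

variable {T s : ℝ}

theorem bcsKernel_zero (T : ℝ) : bcsKernel T 0 = 1 / (2 * T) := if_pos rfl

theorem bcsKernel_of_ne_zero (hs : s ≠ 0) : bcsKernel T s = tanh (s / (2 * T)) / s := if_neg hs

theorem bcsKernel_abs (T s : ℝ) : bcsKernel T |s| = bcsKernel T s := by
  rcases abs_choice s with h | h
  · rw [h]
  · rcases eq_or_ne s 0 with rfl | hs
    · rw [abs_zero]
    rw [h, bcsKernel_of_ne_zero hs, bcsKernel_of_ne_zero (neg_ne_zero.2 hs), neg_div, tanh_neg,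
      neg_div_neg_eq]

theorem bcsKernel_pos (hT : 0 < T) (s : ℝ) : 0 < bcsKernel T s := by
  rw [← bcsKernel_abs]
  rcases (abs_nonneg s).eq_or_lt with h | h
  · rw [← h, bcsKernel_zero]
    positivity
  · rw [bcsKernel_of_ne_zero h.ne']
    exact div_pos (tanh_pos (by positivity)) h

theorem bcsKernel_le (hT : 0 < T) (s : ℝ) : bcsKernel T s ≤ 1 / (2 * T) := by
  rw [← bcsKernel_abs]
  rcases (abs_nonneg s).eq_or_lt with h | h
  · rw [← h, bcsKernel_zero]
  · rw [bcsKernel_of_ne_zero h.ne']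
    calc tanh (|s| / (2 * T)) / |s| ≤ |s| / (2 * T) / |s| := by
          gcongr
          exact tanh_le_self (by positivity)
      _ = 1 / (2 * T) := by field_simp

theorem abs_mul_bcsKernel_le (T s : ℝ) : |s| * bcsKernel T s ≤ 1 := by
  rcases eq_or_ne s 0 with rfl | hs
  · simp
  calc |s| * bcsKernel T s ≤ |s * bcsKernel T s| := by
        rw [abs_mul]
        gcongr
        exact le_abs_self _
    _ = |tanh (s / (2 * T))| := by rw [bcsKernel_of_ne_zero hs, mul_div_cancel₀ _ hs]
    _ ≤ 1 := (abs_tanh_lt_one _).le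

theorem bcsKernel_strictAntiOn (s : ℝ) : StrictAntiOn (fun T => bcsKernel T s) (Ioi 0) := by
  intro T₁ (hT₁ : 0 < T₁) T₂ (hT₂ : 0 < T₂) hT
  change bcsKernel T₂ s < bcsKernel T₁ s
  rw [← bcsKernel_abs T₁, ← bcsKernel_abs T₂]
  rcases (abs_nonneg s).eq_or_lt with h | h
  · simp only [← h, bcsKernel_zero]
    gcongr
  · rw [bcsKernel_of_ne_zero h.ne', bcsKernel_of_ne_zero h.ne']
    exact div_lt_div_of_pos_right (strictMono_tanh (by gcongr)) h

theorem measurable_bcsKernel (T : ℝ) : Measurable (bcsKernel T) :=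
  Measurable.ite (measurableSet_singleton 0) measurable_const
    ((continuous_tanh.measurable.comp (measurable_id.div_const _)).div measurable_id)

theorem tendsto_bcsKernel_atTop (s : ℝ) : Tendsto (fun T => bcsKernel T s) atTop (𝓝 0) := by
  refine squeeze_zero' (g := fun T => 1 / (2 * T)) ?_ ?_
    (tendsto_const_nhds.div_atTop (tendsto_id.const_mul_atTop two_pos))
  · filter_upwards [eventually_gt_atTop 0] with T hT
    exact (bcsKernel_pos hT s).le
  · filter_upwards [eventually_gt_atTop 0] with T hT
    exact bcsKernel_le hT s

theorem bcsKernel_sq_sub_le {T₀ : ℝ} (hT₀ : 0 < T₀) (hT : T₀ ≤ T) (μ p : ℝ) :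
    bcsKernel T (p ^ 2 - μ) ≤ ((1 + |μ|) / (2 * T₀) + 1) * (1 + p ^ 2)⁻¹ := by
  have hk := bcsKernel_pos (hT₀.trans_le hT) (p ^ 2 - μ)
  have hk_le : bcsKernel T (p ^ 2 - μ) ≤ 1 / (2 * T₀) :=
    (bcsKernel_le (hT₀.trans_le hT) _).trans (by gcongr)
  have hsk := abs_mul_bcsKernel_le T (p ^ 2 - μ)
  have hp : p ^ 2 ≤ |p ^ 2 - μ| + |μ| := by
    linarith [le_abs_self (p ^ 2 - μ), le_abs_self μ]
  rw [le_mul_inv_iff₀ (by positivity)]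
  calc bcsKernel T (p ^ 2 - μ) * (1 + p ^ 2)
      ≤ (1 + |μ|) * bcsKernel T (p ^ 2 - μ) + |p ^ 2 - μ| * bcsKernel T (p ^ 2 - μ) := by
        nlinarith
    _ ≤ (1 + |μ|) * (1 / (2 * T₀)) + 1 := by gcongr
    _ = (1 + |μ|) / (2 * T₀) + 1 := by ring

end bcsKernel

theorem bcsIntegral_eq (μ T : ℝ) :
    bcsIntegral μ T = (∫ p, bcsKernel T (p ^ 2 - μ)) / (2 * π) := by
  rw [bcsIntegral, integral_div]
  simp only [bcsKernel, sub_eq_zero]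

theorem integrable_bcsKernel_sq_sub {T : ℝ} (hT : 0 < T) (μ : ℝ) :
    Integrable fun p => bcsKernel T (p ^ 2 - μ) :=
  (integrable_inv_one_add_sq.const_mul _).mono'
    ((measurable_bcsKernel T).comp (by fun_prop)).aestronglyMeasurable
    (ae_of_all _ fun p => by
      rw [norm_of_nonneg (bcsKernel_pos hT _).le]
      exact bcsKernel_sq_sub_le hT le_rfl μ p)

theorem strictAntiOn_bcsIntegral (μ : ℝ) : StrictAntiOn (bcsIntegral μ) (Ioi 0) := by
  intro T₁ hT₁ T₂ hT₂ hT
  rw [bcsIntegral_eq, bcsIntegral_eq]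
  exact div_lt_div_of_pos_right (integral_lt_integral_of_forall_lt
    (integrable_bcsKernel_sq_sub hT₂ μ) (integrable_bcsKernel_sq_sub hT₁ μ)
    fun p => bcsKernel_strictAntiOn _ hT₁ hT₂ hT) (by positivity)

theorem tendsto_bcsIntegral_atTop (μ : ℝ) : Tendsto (bcsIntegral μ) atTop (𝓝 0) := by
  have hlim : Tendsto (fun T => ∫ p, bcsKernel T (p ^ 2 - μ)) atTop (𝓝 0) := by
    simpa using tendsto_integral_filter_of_dominated_convergence
      (F := fun T p => bcsKernel T (p ^ 2 - μ)) _
      (Eventually.of_forall fun T =>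
        ((measurable_bcsKernel T).comp (by fun_prop)).aestronglyMeasurable)
      (eventually_ge_atTop 1 |>.mono fun T hT => ae_of_all _ fun p => by
        rw [norm_of_nonneg (bcsKernel_pos (one_pos.trans_le hT) _).le]
        exact bcsKernel_sq_sub_le one_pos hT μ p)
      (integrable_inv_one_add_sq.const_mul _)
      (ae_of_all _ fun p => tendsto_bcsKernel_atTop (p ^ 2 - μ))
  rw [funext (bcsIntegral_eq μ), ← zero_div (2 * π)]
  exact hlim.div_const _

theorem stmt_13_general (μ a : ℝ) :
    StrictAntiOn (bcsIntegral μ) (Set.Ioi 0) ∧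
    Filter.Tendsto (bcsIntegral μ) Filter.atTop (nhds 0) ∧
    ∀ T₁ ∈ Set.Ioi (0:ℝ), ∀ T₂ ∈ Set.Ioi (0:ℝ),
      bcsIntegral μ T₁ = 1 / a → bcsIntegral μ T₂ = 1 / a → T₁ = T₂ :=
  ⟨strictAntiOn_bcsIntegral μ, tendsto_bcsIntegral_atTop μ,
    fun _ hT₁ _ hT₂ h₁ h₂ => (strictAntiOn_bcsIntegral μ).injOn hT₁ hT₂ (h₁.trans h₂.symm)⟩

theorem stmt_13 (μ a : ℝ) (ha : 0 < a) :
    StrictAntiOn (bcsIntegral μ) (Set.Ioi 0) ∧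
    Filter.Tendsto (bcsIntegral μ) Filter.atTop (nhds 0) ∧
    ∀ T₁ ∈ Set.Ioi (0:ℝ), ∀ T₂ ∈ Set.Ioi (0:ℝ),
      bcsIntegral μ T₁ = 1 / a → bcsIntegral μ T₂ = 1 / a → T₁ = T₂ :=
  stmt_13_general μ a
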